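/- Condition K holds for the Gaussian-exponential kernel in dimension D with bounded parameters: let f(x,y|θ) := exp(ω₁ᵀx)·N(y | aᵀx + b, σ) where θ = (ω₁, a, b, σ) ranges over a compact set Θ ⊂ ℝᴰ × ℝᴰ × ℝ × [σ_min, σ_max] with σ_min > 0, and let x range over a bounded set X ⊂ ℝᴰ. Then there exist positive constants c_α, c_β and ε₀ > 0 such that for all 0 < ε ≤ ε₀, all θ₀, θ ∈ Θ with ‖θ - θ₀‖ ≤ ε, and all x ∈ X, y ∈ ℝ: log f(x,y|θ) ≥ (1 + c_β ε)·log f(x,y|θ₀) − c_α ε. -/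

import Mathlib

open Real

/-- Gaussian density with mean `μ` and variance `σ`. -/
noncomputable def gaussDensity (y μ σ : ℝ) : ℝ :=
  (2 * Real.pi * σ) ^ (-(1:ℝ)/2) * Real.exp (-(y - μ)^2 / (2 * σ))

/-- The Gaussian-exponential kernel `f(x,y|θ) = exp(ω₁ᵀx)·N(y | aᵀx + b, σ)`
with `θ = (ω₁, a, b, σ)`. -/
noncomputable def fKernel (D : ℕ) (x : Fin D → ℝ) (y : ℝ)
    (θ : (Fin D → ℝ) × (Fin D → ℝ) × ℝ × ℝ) : ℝ :=
  Real.exp (∑ j, θ.1 j * x j) * gaussDensity y ((∑ j, θ.2.1 j * x j) + θ.2.2.1) θ.2.2.2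

private lemma absSumBound {D : ℕ} (c x : Fin D → ℝ) {a b : ℝ} (ha : 0 ≤ a)
    (hc : ∀ j, |c j| ≤ a) (hx : ∀ j, |x j| ≤ b) :
    |∑ j, c j * x j| ≤ D * a * b := by
  calc |∑ j, c j * x j| ≤ ∑ j, |c j * x j| := Finset.abs_sum_le_sum_abs _ _
    _ ≤ ∑ _j : Fin D, a * b := Finset.sum_le_sum fun j _ => by
        rw [abs_mul]; exact mul_le_mul (hc j) (hx j) (abs_nonneg _) ha
    _ = D * a * b := by simp [Finset.card_univ, mul_assoc]

private lemma compFst {D : ℕ} (p : (Fin D → ℝ) × (Fin D → ℝ) × ℝ × ℝ) (j : Fin D) :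
    |p.1 j| ≤ ‖p‖ := by
  calc |p.1 j| = ‖p.1 j‖ := (Real.norm_eq_abs _).symm
    _ ≤ ‖p.1‖ := norm_le_pi_norm _ _
    _ ≤ ‖p‖ := norm_fst_le _

private lemma compA {D : ℕ} (p : (Fin D → ℝ) × (Fin D → ℝ) × ℝ × ℝ) (j : Fin D) :
    |p.2.1 j| ≤ ‖p‖ := by
  calc |p.2.1 j| = ‖p.2.1 j‖ := (Real.norm_eq_abs _).symm
    _ ≤ ‖p.2.1‖ := norm_le_pi_norm _ _
    _ ≤ ‖p.2‖ := norm_fst_le _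
    _ ≤ ‖p‖ := norm_snd_le _

private lemma compB {D : ℕ} (p : (Fin D → ℝ) × (Fin D → ℝ) × ℝ × ℝ) :
    |p.2.2.1| ≤ ‖p‖ := by
  calc |p.2.2.1| = ‖p.2.2.1‖ := (Real.norm_eq_abs _).symm
    _ ≤ ‖p.2.2‖ := norm_fst_le _
    _ ≤ ‖p.2‖ := norm_snd_le _
    _ ≤ ‖p‖ := norm_snd_le _

private lemma compS {D : ℕ} (p : (Fin D → ℝ) × (Fin D → ℝ) × ℝ × ℝ) :
    |p.2.2.2| ≤ ‖p‖ := by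
  calc |p.2.2.2| = ‖p.2.2.2‖ := (Real.norm_eq_abs _).symm
    _ ≤ ‖p.2.2‖ := norm_snd_le _
    _ ≤ ‖p.2‖ := norm_snd_le _
    _ ≤ ‖p‖ := norm_snd_le _

private lemma log_fKernel {D : ℕ} (x : Fin D → ℝ) (y : ℝ) (ω a : Fin D → ℝ) (b σ : ℝ)
    (hσ : 0 < σ) :
    Real.log (fKernel D x y (ω, a, b, σ)) =
      (∑ j, ω j * x j) + (-(1:ℝ)/2) * Real.log (2 * Real.pi * σ)
        - (y - ((∑ j, a j * x j) + b))^2 / (2 * σ) := by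
  have hπ : (0:ℝ) < 2 * Real.pi * σ := by
    have := Real.pi_pos; positivity
  unfold fKernel gaussDensity
  rw [Real.log_mul (Real.exp_ne_zero _) (by positivity), Real.log_exp,
    Real.log_mul (by positivity) (Real.exp_ne_zero _), Real.log_rpow hπ, Real.log_exp]
  ring

set_option maxHeartbeats 1000000 in
/-- Condition K holds for the Gaussian-exponential kernel with compact parameter
set (variance bounded in `[σ_min, σ_max]`) and bounded covariates. -/
theorem conditionK_gaussian (D : ℕ)
    (Θ : Set ((Fin D → ℝ) × (Fin D → ℝ) × ℝ × ℝ))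
    (X : Set (Fin D → ℝ)) (σmin σmax : ℝ) (hσmin : 0 < σmin)
    (hΘc : IsCompact Θ)
    (hΘσ : ∀ θ ∈ Θ, θ.2.2.2 ∈ Set.Icc σmin σmax)
    (hX : Bornology.IsBounded X) :
    ∃ cα cβ ε₀ : ℝ, 0 < cα ∧ 0 < cβ ∧ 0 < ε₀ ∧
      ∀ ε : ℝ, 0 < ε → ε ≤ ε₀ →
        ∀ θ₀ ∈ Θ, ∀ θ ∈ Θ, ‖θ - θ₀‖ ≤ ε →
          ∀ x ∈ X, ∀ y : ℝ,
            (1 + cβ * ε) * Real.log (fKernel D x y θ₀) - cα * ε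
              ≤ Real.log (fKernel D x y θ) := by
  obtain ⟨R₀, hR₀⟩ := hX.exists_norm_le
  obtain ⟨B₀, hB₀⟩ := hΘc.isBounded.exists_norm_le
  set R : ℝ := max R₀ 0 with hRdef
  set B : ℝ := max B₀ 0 with hBdef
  have hR0 : 0 ≤ R := le_max_right _ _
  have hB0 : 0 ≤ B := le_max_right _ _
  set C : ℝ := (D:ℝ) * R + 1 with hCdef
  have hC : 0 < C := by positivity
  set σM : ℝ := max σmax σmin with hσMdef
  have hσMpos : 0 < σM := lt_of_lt_of_le hσmin (le_max_right _ _)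
  set cβ : ℝ := 2 * (σM + 1) / σmin with hcβdef
  have hcβ : 0 < cβ := div_pos (by linarith) hσmin
  set M : ℝ := (D:ℝ) * B * R
      + (|Real.log (2 * Real.pi * σmin)| + |Real.log (2 * Real.pi * σmax)|) / 2 with hMdef
  have hM0 : 0 ≤ M := by positivity
  set c₃ : ℝ := 2 * C ^ 2 / σmin with hc₃def
  have hc₃ : 0 < c₃ := div_pos (by positivity) hσmin
  set cα : ℝ := (D:ℝ) * R + 1 / (2 * σmin) + cβ * M + c₃ with hcαdef
  have hcα : 0 < cα := by
    have h1 : 0 < 1 / (2 * σmin) := by positivity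
    have h2 : 0 ≤ cβ * M := mul_nonneg hcβ.le hM0
    have h3 : 0 ≤ (D:ℝ) * R := by positivity
    rw [hcαdef]; linarith
  refine ⟨cα, cβ, min 1 (σmin / 2), hcα, hcβ, lt_min one_pos (by linarith), ?_⟩
  intro ε hε hεle θ₀ hθ₀ θ hθ hdist x hx y
  have hε1 : ε ≤ 1 := le_trans hεle (min_le_left _ _)
  have hεσ : ε ≤ σmin / 2 := le_trans hεle (min_le_right _ _)
  obtain ⟨ω, a, b, σ⟩ := θ
  obtain ⟨ω₀, a₀, b₀, σ₀⟩ := θ₀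
  have hσmem := hΘσ _ hθ
  have hσ₀mem := hΘσ _ hθ₀
  simp only [Set.mem_Icc] at hσmem hσ₀mem
  have hσpos : 0 < σ := lt_of_lt_of_le hσmin hσmem.1
  have hσ₀pos : 0 < σ₀ := lt_of_lt_of_le hσmin hσ₀mem.1
  rw [log_fKernel x y ω a b σ hσpos, log_fKernel x y ω₀ a₀ b₀ σ₀ hσ₀pos]
  -- component bounds from `hdist`
  have hω : ∀ j, |ω j - ω₀ j| ≤ ε := fun j =>
    le_trans (compFst ((ω, a, b, σ) - (ω₀, a₀, b₀, σ₀)) j) hdist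
  have ha : ∀ j, |a j - a₀ j| ≤ ε := fun j =>
    le_trans (compA ((ω, a, b, σ) - (ω₀, a₀, b₀, σ₀)) j) hdist
  have hb : |b - b₀| ≤ ε := le_trans (compB ((ω, a, b, σ) - (ω₀, a₀, b₀, σ₀))) hdist
  have hσd : |σ - σ₀| ≤ ε := le_trans (compS ((ω, a, b, σ) - (ω₀, a₀, b₀, σ₀))) hdist
  have hxR : ∀ j, |x j| ≤ R := fun j => by
    calc |x j| = ‖x j‖ := (Real.norm_eq_abs _).symm
      _ ≤ ‖x‖ := norm_le_pi_norm _ _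
      _ ≤ R₀ := hR₀ x hx
      _ ≤ R := le_max_left _ _
  set s : ℝ := ∑ j, ω j * x j with hsdef
  set s₀ : ℝ := ∑ j, ω₀ j * x j with hs₀def
  set m : ℝ := (∑ j, a j * x j) + b with hmdef
  set m₀ : ℝ := (∑ j, a₀ j * x j) + b₀ with hm₀def
  -- F1 : s₀ - s ≤ D * ε * R
  have hsdiff : |s₀ - s| ≤ (D:ℝ) * ε * R := by
    have heq : s₀ - s = ∑ j, (ω₀ j - ω j) * x j := by
      rw [hsdef, hs₀def, ← Finset.sum_sub_distrib]
      exact Finset.sum_congr rfl fun j _ => by ring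
    rw [heq]
    exact absSumBound _ _ hε.le (fun j => by rw [abs_sub_comm]; exact hω j) hxR
  have F1 : s₀ - s ≤ (D:ℝ) * ε * R := le_trans (le_abs_self _) hsdiff
  -- F2 : log increment
  have F2 : Real.log (2 * Real.pi * σ) - Real.log (2 * Real.pi * σ₀) ≤ ε / σmin := by
    have hπ : (0:ℝ) < Real.pi := Real.pi_pos
    rw [← Real.log_div (by positivity) (by positivity),
        mul_div_mul_left σ σ₀ (by positivity : (2:ℝ) * Real.pi ≠ 0)]
    have h2 := Real.log_le_sub_one_of_pos (show (0:ℝ) < σ / σ₀ by positivity)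
    have h3 : σ / σ₀ - 1 ≤ ε / σmin := by
      rw [div_sub_one (ne_of_gt hσ₀pos), div_le_div_iff₀ hσ₀pos hσmin]
      have hle : σ - σ₀ ≤ ε := le_trans (le_abs_self _) hσd
      have h4 := mul_le_mul_of_nonneg_right hle hσmin.le
      have h5 := mul_le_mul_of_nonneg_left hσ₀mem.1 hε.le
      linarith
    linarith
  -- F3 : A₀ ≤ M
  have F3 : s₀ + (-(1:ℝ)/2) * Real.log (2 * Real.pi * σ₀) ≤ M := by
    have hs₀B : |s₀| ≤ (D:ℝ) * B * R :=
      absSumBound _ _ hB0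
        (fun j => le_trans (compFst (ω₀, a₀, b₀, σ₀) j) (le_trans (hB₀ _ hθ₀) (le_max_left _ _)))
        hxR
    have hπ : (0:ℝ) < Real.pi := Real.pi_pos
    have hmono : Real.log (2 * Real.pi * σmin) ≤ Real.log (2 * Real.pi * σ₀) :=
      Real.log_le_log (by positivity) (mul_le_mul_of_nonneg_left hσ₀mem.1 (by positivity))
    have habs1 : -Real.log (2 * Real.pi * σmin) ≤ |Real.log (2 * Real.pi * σmin)| :=
      neg_le_abs _
    have habs2 : (0:ℝ) ≤ |Real.log (2 * Real.pi * σmax)| := abs_nonneg _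
    have hs₀le : s₀ ≤ (D:ℝ) * B * R := le_trans (le_abs_self _) hs₀B
    rw [hMdef]; linarith
  -- hgap : (1+ε) σ₀ ≤ (1+cβ ε) σ
  have hcβσ : cβ * σmin = 2 * (σM + 1) := div_mul_cancel₀ _ (ne_of_gt hσmin)
  have hσ₀σ : σ₀ - σ ≤ ε := by
    have := neg_abs_le (σ - σ₀); linarith [hσd]
  have hσ₀M : σ₀ ≤ σM := le_trans hσ₀mem.2 (le_max_left _ _)
  have hgap : (1 + ε) * σ₀ ≤ (1 + cβ * ε) * σ := by
    have h1 : 0 ≤ ε * (cβ * (σ - σmin)) :=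
      mul_nonneg hε.le (mul_nonneg hcβ.le (sub_nonneg.mpr hσmem.1))
    have h2 : ε * σ₀ ≤ ε * σM := mul_le_mul_of_nonneg_left hσ₀M hε.le
    have h3 : ε * (cβ * σmin) = ε * (2 * (σM + 1)) := by rw [hcβσ]
    have h4 : 0 ≤ ε * σM := mul_nonneg hε.le hσMpos.le
    linarith [h1, h2, h3, h4, hσ₀σ]
  -- mean difference
  have hmdiff : |m - m₀| ≤ C * ε := by
    have hsumeq : (∑ j, (a j - a₀ j) * x j)
        = (∑ j, a j * x j) - ∑ j, a₀ j * x j := by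
      rw [← Finset.sum_sub_distrib]
      exact Finset.sum_congr rfl fun j _ => by ring
    have heq : m - m₀ = (∑ j, (a j - a₀ j) * x j) + (b - b₀) := by
      rw [hmdef, hm₀def, hsumeq]; ring
    have h1 : |∑ j, (a j - a₀ j) * x j| ≤ (D:ℝ) * ε * R := absSumBound _ _ hε.le ha hxR
    calc |m - m₀| ≤ |∑ j, (a j - a₀ j) * x j| + |b - b₀| := by rw [heq]; exact abs_add_le _ _
      _ ≤ (D:ℝ) * ε * R + ε := add_le_add h1 hb
      _ = C * ε := by rw [hCdef]; ring
  have hd2 : (m - m₀) ^ 2 ≤ (C * ε) ^ 2 := by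
    rw [← sq_abs]
    exact pow_le_pow_left₀ (abs_nonneg _) hmdiff 2
  -- key1 : (y-m)^2 ≤ (1+ε)(y-m₀)^2 + 2C²ε
  have key1 : (y - m) ^ 2 ≤ (1 + ε) * (y - m₀) ^ 2 + 2 * C ^ 2 * ε := by
    have hmul : ε * (y - m) ^ 2 ≤ ε * ((1 + ε) * (y - m₀) ^ 2 + 2 * C ^ 2 * ε) := by
      have h5 : (m - m₀) ^ 2 * ε ≤ (m - m₀) ^ 2 * 1 :=
        mul_le_mul_of_nonneg_left hε1 (sq_nonneg (m - m₀))
      linarith [sq_nonneg (ε * (y - m₀) - (m₀ - m)), hd2, h5]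
    exact (mul_le_mul_iff_right₀ hε).mp hmul
  -- F4 : quadratic form inequality
  have F4 : (y - m) ^ 2 / (2 * σ) ≤ (1 + cβ * ε) * ((y - m₀) ^ 2 / (2 * σ₀)) + c₃ * ε := by
    rw [div_le_iff₀ (by positivity : (0:ℝ) < 2 * σ)]
    set q : ℝ := (y - m₀) ^ 2 / (2 * σ₀) with hqdef
    have hq : (y - m₀) ^ 2 = q * (2 * σ₀) := by
      rw [hqdef]; field_simp
    have hq0 : 0 ≤ q := by rw [hqdef]; positivity
    have hgap' : q * ((1 + ε) * σ₀) ≤ q * ((1 + cβ * ε) * σ) :=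
      mul_le_mul_of_nonneg_left hgap hq0
    have hc₃σ : c₃ * σmin = 2 * C ^ 2 := div_mul_cancel₀ _ (ne_of_gt hσmin)
    have hc₃σ' : 2 * C ^ 2 * ε ≤ c₃ * ε * (2 * σ) := by
      have h6 : ε * (c₃ * σmin) = ε * (2 * C ^ 2) := by rw [hc₃σ]
      have h8 : c₃ * ε * σmin ≤ c₃ * ε * σ :=
        mul_le_mul_of_nonneg_left hσmem.1 (mul_nonneg hc₃.le hε.le)
      linarith [h6, h8, mul_nonneg (sq_nonneg C) hε.le]
    have hq2 : (1 + ε) * (y - m₀) ^ 2 = q * ((1 + ε) * (2 * σ₀)) := by rw [hq]; ring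
    linarith [key1, hq2, hgap', hc₃σ']
  -- assemble
  have hcβε : (0:ℝ) ≤ cβ * ε := mul_nonneg hcβ.le hε.le
  have F3' : cβ * ε * (s₀ + (-(1:ℝ)/2) * Real.log (2 * Real.pi * σ₀)) ≤ cβ * ε * M :=
    mul_le_mul_of_nonneg_left F3 hcβε
  have hQ₀0 : 0 ≤ (y - m₀) ^ 2 / (2 * σ₀) := by positivity
  rw [hcαdef]
  have hcαε : ((D:ℝ) * R + 1 / (2 * σmin) + cβ * M + c₃) * ε
      = (D:ℝ) * ε * R + (ε / σmin) / 2 + cβ * ε * M + c₃ * ε := by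
    field_simp
  linarith [F1, F2, F3', F4, hcαε]
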